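/- Let M be a set, let R : ℝ → M → M be a family of maps with R(0) the identity, let φ : M → M be a bijection, let S := {x ∈ M : φ(x) ≠ x}, let 𝒪 := ⋃_{s∈ℝ} R(s)(S), and let ψ : M → M satisfy ψ(𝒪) ∩ 𝒪 = ∅. Then for every t ∈ ℝ and every x ∈ M with ψ(φ(x)) = R(t)(x), one has φ(x) = x, and hence ψ(x) = R(t)(x). -/
import Mathlib

/-- Set-theoretic core of Lemma 5.2: if `ψ` displaces the `R`-orbit `𝒪` of the support of the
bijection `φ`, then any point `x` with `ψ (φ x) = R t x` is a fixed point of `φ`, hence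
`ψ x = R t x`. -/
theorem fixed_of_displaces_orbit_of_support
    {M : Type*} (R : ℝ → M → M) (hR0 : R 0 = id)
    (φ : M → M) (hφ : Function.Bijective φ) (ψ : M → M)
    (hdisp : (ψ '' (⋃ s : ℝ, R s '' {x | φ x ≠ x})) ∩ (⋃ s : ℝ, R s '' {x | φ x ≠ x}) = ∅) :
    ∀ (t : ℝ) (x : M), ψ (φ x) = R t x → φ x = x ∧ ψ x = R t x := by
  intro t x hx
  have hfix : φ x = x := by
    by_contra h
    have hφx : φ (φ x) ≠ φ x := fun e => h (hφ.1 e)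
    have h1 : φ x ∈ ⋃ s : ℝ, R s '' {x | φ x ≠ x} := by
      refine Set.mem_iUnion.2 ⟨0, ⟨φ x, hφx, ?_⟩⟩
      simp [hR0]
    have h2 : R t x ∈ ⋃ s : ℝ, R s '' {x | φ x ≠ x} :=
      Set.mem_iUnion.2 ⟨t, ⟨x, h, rfl⟩⟩
    have : ψ (φ x) ∈ (ψ '' (⋃ s : ℝ, R s '' {x | φ x ≠ x})) ∩ (⋃ s : ℝ, R s '' {x | φ x ≠ x}) :=
      ⟨⟨φ x, h1, rfl⟩, hx ▸ h2⟩
    simp [hdisp] at this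
  rw [hfix] at hx; exact ⟨hfix, hx⟩
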